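/- Let L/K be a finite purely inseparable extension of fields of odd characteristic p, let N/L be a separable algebraic extension, and let M be the maximal subfield of N separable over K. Then N = LM and N/M is purely inseparable; moreover N/L is Galois if and only if M/K is Galois, and N is pythagorean if and only if M is pythagorean. -/

import Mathlib

/-!
Since `L/K` is purely inseparable, an element of `N` separable over `K` has the same minimal
polynomial over `K` as over `L`. Together with `N = L(M)`, this transports normality between
`N/L` and `M/K`. Since `N/M` is purely inseparable, every sum of squares in `N` has a `p ^ n`-th
power that is a sum of squares in `M`. Because `p ^ n` is odd, an element whose `p ^ n`-th power
is a square is itself a square.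
-/

open Polynomial IntermediateField

def IsPythagorean (F : Type*) [Field F] : Prop :=
  ∀ a : F, IsSumSq a → IsSquare a

theorem IsSumSq.map {R S F : Type*} [NonUnitalNonAssocSemiring R] [NonUnitalNonAssocSemiring S]
    [FunLike F R S] [NonUnitalRingHomClass F R S] (f : F) {s : R} (hs : IsSumSq s) :
    IsSumSq (f s) := by
  induction hs with
  | zero => simp
  | sq_add a _ ih => simpa using IsSumSq.sq_add (f a) ih

theorem IsSquare.of_pow_odd {G₀ : Type*} [CommGroupWithZero G₀] {x : G₀} {m : ℕ} (hm : Odd m)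
    (h : IsSquare (x ^ m)) : IsSquare x := by
  rcases eq_or_ne x 0 with rfl | hx
  · exact ⟨0, by simp⟩
  obtain ⟨k, rfl⟩ := hm
  obtain ⟨y, hy⟩ := h
  -- `x = x ^ (2 * k + 1) / (x ^ k) ^ 2`
  refine ⟨y / x ^ k, ?_⟩
  rw [div_mul_div_comm, ← hy, eq_div_iff (by simp [hx]), ← pow_add, ← pow_succ', two_mul]

namespace IsPurelyInseparable

variable {F E : Type*} [Field F] [Field E] [Algebra F E] [IsPurelyInseparable F E]
  (p : ℕ) [ExpChar F p]

theorem exists_isSumSq_algebraMap_eq_pow {s : E} (hs : IsSumSq s) :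
    ∃ n, ∃ b : F, IsSumSq b ∧ algebraMap F E b = s ^ p ^ n := by
  have := expChar_of_injective_algebraMap (algebraMap F E).injective p
  induction hs with
  | zero => exact ⟨0, 0, .zero, by simp⟩
  | @sq_add x s _ ih =>
    obtain ⟨n, b, hb, hbs⟩ := ih
    obtain ⟨m, y, hyx⟩ := pow_mem F p x
    have hbm : IsSumSq (b ^ p ^ m) := by
      simpa only [iterateFrobenius_def] using hb.map (_root_.iterateFrobenius F p m)
    refine ⟨m + n, y ^ p ^ n * y ^ p ^ n + b ^ p ^ m, .sq_add _ hbm, ?_⟩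
    rw [add_pow_expChar_pow, mul_pow, map_add, map_mul, map_pow, map_pow, hyx, hbs]
    ring

variable {p}

theorem isSquare_algebraMap_iff (hp : Odd p) {a : F} :
    IsSquare (algebraMap F E a) ↔ IsSquare a := by
  refine ⟨fun ⟨c, hc⟩ ↦ ?_, fun h ↦ h.map (algebraMap F E)⟩
  obtain ⟨n, y, hyc⟩ := pow_mem F p c
  refine IsSquare.of_pow_odd (hp.pow (n := n)) ⟨y, (algebraMap F E).injective ?_⟩
  rw [map_pow, map_mul, hc, hyc, mul_pow]

theorem isPythagorean_iff (hp : Odd p) : IsPythagorean E ↔ IsPythagorean F := by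
  refine ⟨fun hE a ha ↦ (isSquare_algebraMap_iff hp).1 (hE _ (ha.map (algebraMap F E))),
    fun hF s hs ↦ ?_⟩
  obtain ⟨n, b, hb, hbs⟩ := exists_isSumSq_algebraMap_eq_pow (F := F) p hs
  refine IsSquare.of_pow_odd (hp.pow (n := n)) ?_
  rw [← hbs]
  exact (hF b hb).map (algebraMap F E)

end IsPurelyInseparable

namespace separableClosure

variable {F E K : Type*} [Field F] [Field E] [Field K] [Algebra F E] [Algebra E K] [Algebra F K]
  [IsScalarTower F E K]

theorem fieldRange_sup_eq_top [Algebra.IsAlgebraic F E] [Algebra.IsSeparable E K] :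
    (IsScalarTower.toAlgHom F E K).fieldRange ⊔ separableClosure F K = ⊤ := by
  let i : E ≃ₐ[F] (IsScalarTower.toAlgHom F E K).fieldRange :=
    AlgEquiv.ofInjectiveField (IsScalarTower.toAlgHom F E K)
  have h := restrictScalars_adjoin_of_algEquiv i rfl (separableClosure F K : Set K)
  rw [adjoin_eq_of_isAlgebraic_of_isSeparable, restrictScalars_top,
    restrictScalars_adjoin_eq_sup, adjoin_self] at h
  exact h.symm

variable [IsPurelyInseparable F E] [Algebra.IsSeparable E K]

theorem normal_iff_normal_of_isPurelyInseparable :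
    Normal E K ↔ Normal F (separableClosure F K) := by
  constructor
  · refine fun _ ↦ ⟨fun x ↦ ?_⟩
    have hsep : IsSeparable F (x : K) := mem_separableClosure_iff.1 x.2
    have hK := Normal.splits ‹Normal E K› (x : K)
    rw [← minpoly.map_eq_of_isSeparable_of_isPurelyInseparable E _ hsep, Polynomial.map_map,
      ← IsScalarTower.algebraMap_eq] at hK
    rw [minpoly_eq]
    -- every root of `minpoly F x` is separable over `F`, hence lies in the separable closure
    exact splits_of_splits hK fun y hy ↦
      mem_separableClosure_iff.2 (hsep.of_dvd (minpoly.dvd F y (mem_rootSet.1 hy).2))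
  · refine fun hM ↦ ⟨fun x ↦ ?_⟩
    have hx : x ∈ adjoin E (separableClosure F K : Set K) := by
      rw [adjoin_eq_of_isAlgebraic_of_isSeparable]; trivial
    refine splits_of_mem_adjoin (F := E) (K := K) (L := K)
      (fun m hm ↦ ⟨Algebra.IsIntegral.isIntegral m, ?_⟩) hx
    have hsep : IsSeparable F m := mem_separableClosure_iff.1 hm
    have hmK := (hM.splits ⟨m, hm⟩).map (algebraMap (separableClosure F K) K)
    rw [minpoly_eq, Polynomial.map_map, ← IsScalarTower.algebraMap_eq] at hmK
    rwa [← minpoly.map_eq_of_isSeparable_of_isPurelyInseparable E _ hsep, Polynomial.map_map,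
      ← IsScalarTower.algebraMap_eq]

theorem isGalois_iff_isGalois_of_isPurelyInseparable :
    IsGalois E K ↔ IsGalois F (separableClosure F K) := by
  rw [isGalois_iff, isGalois_iff, ← normal_iff_normal_of_isPurelyInseparable (E := E)]
  simp only [separableClosure.isSeparable, ‹Algebra.IsSeparable E K›, true_and]

end separableClosure

theorem stmt_10_general (K L N : Type) [Field K] [Field L] [Field N]
    [Algebra K L] [Algebra L N] [Algebra K N] [IsScalarTower K L N]
    [IsPurelyInseparable K L]
    [Algebra.IsSeparable L N]
    (p : ℕ) (hp : p.Prime) (hodd : p ≠ 2) [CharP K p] :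
    ((IsScalarTower.toAlgHom K L N).fieldRange ⊔ separableClosure K N = ⊤) ∧
    IsPurelyInseparable (separableClosure K N) N ∧
    (IsGalois L N ↔ IsGalois K (separableClosure K N)) ∧
    ((∀ a : N, IsSumSq a → IsSquare a) ↔
      (∀ a : separableClosure K N, IsSumSq a → IsSquare a)) := by
  have : Algebra.IsAlgebraic K N := .trans K L N
  have : ExpChar K p := .prime hp
  have : ExpChar (separableClosure K N) p :=
    expChar_of_injective_algebraMap (algebraMap K _).injective p
  exact ⟨separableClosure.fieldRange_sup_eq_top, separableClosure.isPurelyInseparable K N,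
    separableClosure.isGalois_iff_isGalois_of_isPurelyInseparable,
    IsPurelyInseparable.isPythagorean_iff (hp.odd_of_ne_two hodd)⟩

/-- Let `L/K` be finite purely inseparable of odd characteristic `p`, `N/L`
separable algebraic, and `M = separableClosure K N` the maximal subfield of `N` separable over
`K`. Then `N = LM`, `N/M` is purely inseparable, `N/L` is Galois iff `M/K` is Galois, and `N`
is pythagorean iff `M` is pythagorean. -/
theorem stmt_10 (K L N : Type) [Field K] [Field L] [Field N]
    [Algebra K L] [Algebra L N] [Algebra K N] [IsScalarTower K L N]
    [FiniteDimensional K L] [IsPurelyInseparable K L]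
    [Algebra.IsSeparable L N]
    (p : ℕ) (hp : p.Prime) (hodd : p ≠ 2) [CharP K p] :
    ((IsScalarTower.toAlgHom K L N).fieldRange ⊔ separableClosure K N = ⊤) ∧
    IsPurelyInseparable (separableClosure K N) N ∧
    (IsGalois L N ↔ IsGalois K (separableClosure K N)) ∧
    ((∀ a : N, IsSumSq a → IsSquare a) ↔
      (∀ a : separableClosure K N, IsSumSq a → IsSquare a)) :=
  stmt_10_general K L N p hp hodd
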